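/- arXiv:1109.5365 — 6 statements merged into one kernel-verified Lean document; each statement's English description precedes it below -/
import Mathlib

section
/- Let a, b ∈ ℂ with Im(a·conj(b)) < 0 (so that the ℝ-linear map ℂ → ℂ sending 1 ↦ a and i ↦ b is orientation-preserving). Suppose 0 < ε ≤ 1/2, |‖a‖ − ‖b‖| ≤ ε‖b‖, and |Re(a·conj(b))| ≤ ε‖a‖‖b‖. Then ‖a + i·b‖ ≤ 3ε·‖a − i·b‖. -/
/-!
Write `p = ‖a‖‖b‖` and `t = -Im(a b̄) > 0`. Then `‖a ± i b‖² = ‖a‖² + ‖b‖² ∓ 2t`, so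
`‖a + i b‖² = (‖a‖ - ‖b‖)² + 2(p - t)`. Since `Re(a b̄)² + t² = p²`, the defect satisfies
`p (p - t) ≤ (p - t)(p + t) = Re(a b̄)² ≤ ε² p²`, hence `‖a + i b‖² ≤ ε² (‖b‖² + 2p)`, which is
at most `9 ε² (‖a‖² + ‖b‖²) ≤ 9 ε² ‖a - i b‖²`.
-/

open ComplexConjugate

namespace Complex

lemma sq_norm_add_I_mul (a b : ℂ) :
    ‖a + I * b‖ ^ 2 = ‖a‖ ^ 2 + ‖b‖ ^ 2 + 2 * (a * conj b).im := by
  simp only [Complex.sq_norm, normSq_add, normSq_I, one_mul, map_mul, conj_I, mul_re, mul_im, neg_re,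
    neg_im, I_re, I_im, conj_re, conj_im]
  ring

lemma sq_norm_sub_I_mul (a b : ℂ) :
    ‖a - I * b‖ ^ 2 = ‖a‖ ^ 2 + ‖b‖ ^ 2 - 2 * (a * conj b).im := by
  simp only [Complex.sq_norm, normSq_sub, normSq_I, one_mul, map_mul, conj_I, mul_re, mul_im, neg_re,
    neg_im, I_re, I_im, conj_re, conj_im]
  ring

lemma re_sq_add_im_sq_mul_conj (a b : ℂ) :
    (a * conj b).re ^ 2 + (a * conj b).im ^ 2 = (‖a‖ * ‖b‖) ^ 2 := by
  rw [mul_pow, Complex.sq_norm, Complex.sq_norm, ← normSq_conj b, ← normSq_mul, normSq_apply]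
  ring

end Complex

lemma sub_le_sq_mul_of_sq_add_sq_eq {p t x ε : ℝ} (hp : 0 ≤ p) (ht : 0 ≤ t)
    (hsum : x ^ 2 + t ^ 2 = p ^ 2) (hx : |x| ≤ ε * p) : p - t ≤ ε ^ 2 * p := by
  rcases hp.eq_or_lt with rfl | hp
  · nlinarith
  have htp : t ≤ p := by nlinarith
  have hx2 : x ^ 2 ≤ (ε * p) ^ 2 := sq_le_sq' (abs_le.mp hx).1 (abs_le.mp hx).2
  have : p * (p - t) ≤ p * (ε ^ 2 * p) := by nlinarith
  exact le_of_mul_le_mul_left this hp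

lemma Complex.sq_norm_add_I_mul_le {a b : ℂ} {ε : ℝ} (horient : (a * conj b).im ≤ 0)
    (hre : |(a * conj b).re| ≤ ε * ‖a‖ * ‖b‖) :
    ‖a + I * b‖ ^ 2 ≤ (‖a‖ - ‖b‖) ^ 2 + 2 * ε ^ 2 * (‖a‖ * ‖b‖) := by
  have hdefect : ‖a‖ * ‖b‖ - -(a * conj b).im ≤ ε ^ 2 * (‖a‖ * ‖b‖) :=
    sub_le_sq_mul_of_sq_add_sq_eq (x := (a * conj b).re) (by positivity) (neg_nonneg.mpr horient)
      (by rw [neg_sq]; exact re_sq_add_im_sq_mul_conj a b) (by rwa [← mul_assoc])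
  rw [sq_norm_add_I_mul]
  linarith

theorem stmt_0_general (a b : ℂ) (ε : ℝ)
    (horient : (a * (starRingEnd ℂ) b).im < 0)
    (hε0 : 0 < ε)
    (hnorm : |‖a‖ - ‖b‖| ≤ ε * ‖b‖)
    (hre : |(a * (starRingEnd ℂ) b).re| ≤ ε * ‖a‖ * ‖b‖) :
    ‖a + Complex.I * b‖ ≤ 3 * ε * ‖a - Complex.I * b‖ := by
  have hdiff : (‖a‖ - ‖b‖) ^ 2 ≤ (ε * ‖b‖) ^ 2 := sq_le_sq' (abs_le.mp hnorm).1 (abs_le.mp hnorm).2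
  have hsq : ‖a + Complex.I * b‖ ^ 2 ≤ (3 * ε * ‖a - Complex.I * b‖) ^ 2 :=
    calc ‖a + Complex.I * b‖ ^ 2
        ≤ (‖a‖ - ‖b‖) ^ 2 + 2 * ε ^ 2 * (‖a‖ * ‖b‖) := Complex.sq_norm_add_I_mul_le horient.le hre
      _ ≤ 9 * ε ^ 2 * (‖a‖ ^ 2 + ‖b‖ ^ 2) := by
        nlinarith [mul_nonneg (sq_nonneg ε) (sq_nonneg (‖a‖ - ‖b‖)),
          mul_nonneg (sq_nonneg ε) (sq_nonneg ‖a‖)]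
      _ ≤ (3 * ε * ‖a - Complex.I * b‖) ^ 2 := by
        rw [mul_pow, Complex.sq_norm_sub_I_mul]
        nlinarith [mul_nonneg (sq_nonneg ε) (neg_nonneg.mpr horient.le)]
  exact le_of_sq_le_sq hsq (by positivity)

/-- Fact A of §4.2: if the partial derivatives `a = f_x` and `b = f_y` of an
orientation-preserving `C¹` map have almost equal norms and almost vanishing
inner product, then `‖∂̄f‖ = ‖a + i·b‖/2` is small compared to
`‖∂f‖ = ‖a − i·b‖/2`, i.e. the map is almost conformal. -/
theorem stmt_0 (a b : ℂ) (ε : ℝ)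
    (horient : (a * (starRingEnd ℂ) b).im < 0)
    (hε0 : 0 < ε) (hε1 : ε ≤ 1 / 2)
    (hnorm : |‖a‖ - ‖b‖| ≤ ε * ‖b‖)
    (hre : |(a * (starRingEnd ℂ) b).re| ≤ ε * ‖a‖ * ‖b‖) :
    ‖a + Complex.I * b‖ ≤ 3 * ε * ‖a - Complex.I * b‖ :=
  stmt_0_general a b ε horient hε0 hnorm hre
end

section
/- Let a > 0, 0 < ε ≤ 1/2, and let g₁, g₂ : [0, a] → ℝ be C¹ functions with g₂(y) > g₁(y) > 0 for all y ∈ [0, a]. Set b = sup_{0 ≤ y ≤ a} (g₂(y) − g₁(y)), and let R = {(x, y) ∈ ℝ² : 0 ≤ y ≤ a, g₁(y) ≤ x ≤ g₂(y)}. Define f : R → ℝ² by f(x, y) = ( b·(x − g₁(y))/(g₂(y) − g₁(y)), y ). Then f is a homeomorphism of R onto the rectangle [0, b] × [0, a] that preserves the second coordinate (it is height-preserving); moreover there is a universal constant C > 0 such that at every point (x, y) ∈ R at whose height y one has |g₁′(y)| ≤ ε, |g₂′(y)| ≤ ε, and |b/(g₂(y) − g₁(y)) − 1| ≤ ε, the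 partial derivatives of f satisfy |‖f_x‖/‖f_y‖ − 1| ≤ Cε and |⟨f_x, f_y⟩| ≤ Cε. -/
open Set

/-!
At each height `y` the map is the affine bijection of the fibre `[g₁ y, g₂ y]` onto `[0, b]`,
and its inverse `(u, y) ↦ (g₁ y + u (g₂ y - g₁ y) / b, y)` is continuous as well. Its partial
derivatives are `f_x = (s, 0)` and `f_y = (-s m, 1)`, where `s = b / (g₂ y - g₁ y)` and `m` is a
convex combination of `g₁' y` and `g₂' y`. At an ε-good height `|s - 1| ≤ ε` and `|m| ≤ ε`, so
`‖f_x‖ / ‖f_y‖ = s / √(1 + s²m²)` and `⟨f_x, f_y⟩ = -s²m` are `O(ε)`-close to `1` and `0`.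
-/

def Set.InvOn.homeomorph {X Y : Type*} [TopologicalSpace X] [TopologicalSpace Y]
    {f : X → Y} {g : Y → X} {s : Set X} {t : Set Y} (h : InvOn g f s t)
    (hf : MapsTo f s t) (hg : MapsTo g t s) (hfc : ContinuousOn f s) (hgc : ContinuousOn g t) :
    s ≃ₜ t where
  toFun := hf.restrict f s t
  invFun := hg.restrict g t s
  left_inv p := Subtype.ext (h.1 p.2)
  right_inv q := Subtype.ext (h.2 q.2)
  continuous_toFun := hfc.mapsToRestrict hf
  continuous_invFun := hgc.mapsToRestrict hg

namespace Straighten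

def region (g₁ g₂ : ℝ → ℝ) (S : Set ℝ) : Set (ℝ × ℝ) :=
  {p | p.2 ∈ S ∧ p.1 ∈ Icc (g₁ p.2) (g₂ p.2)}

noncomputable def straighten (b : ℝ) (g₁ g₂ : ℝ → ℝ) (p : ℝ × ℝ) : ℝ × ℝ :=
  (b * (p.1 - g₁ p.2) / (g₂ p.2 - g₁ p.2), p.2)

noncomputable def unstraighten (b : ℝ) (g₁ g₂ : ℝ → ℝ) (q : ℝ × ℝ) : ℝ × ℝ :=
  (g₁ q.2 + q.1 * (g₂ q.2 - g₁ q.2) / b, q.2)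

variable {b : ℝ} {g₁ g₂ : ℝ → ℝ} {S : Set ℝ}

theorem mapsTo_straighten (hb : 0 ≤ b) (hg : ∀ y ∈ S, g₁ y < g₂ y) :
    MapsTo (straighten b g₁ g₂) (region g₁ g₂ S) (Icc 0 b ×ˢ S) := by
  rintro ⟨x, y⟩ ⟨hy, hx₁, hx₂⟩
  have hw : 0 < g₂ y - g₁ y := sub_pos.2 (hg y hy)
  refine ⟨⟨div_nonneg (mul_nonneg hb (sub_nonneg.2 hx₁)) hw.le, ?_⟩, hy⟩
  rw [straighten, div_le_iff₀ hw]
  exact mul_le_mul_of_nonneg_left (by linarith) hb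

theorem mapsTo_unstraighten (hb : 0 < b) (hg : ∀ y ∈ S, g₁ y ≤ g₂ y) :
    MapsTo (unstraighten b g₁ g₂) (Icc 0 b ×ˢ S) (region g₁ g₂ S) := by
  rintro ⟨u, y⟩ ⟨⟨hu₀, hub⟩, hy⟩
  have hw : 0 ≤ g₂ y - g₁ y := sub_nonneg.2 (hg y hy)
  have hle : u * (g₂ y - g₁ y) / b ≤ g₂ y - g₁ y := by
    rw [div_le_iff₀ hb, mul_comm]
    exact mul_le_mul_of_nonneg_left hub hw
  refine ⟨hy, ?_, ?_⟩ <;> dsimp only [unstraighten]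
  · linarith [div_nonneg (mul_nonneg hu₀ hw) hb.le]
  · linarith

theorem invOn_unstraighten (hb : b ≠ 0) (hg : ∀ y ∈ S, g₁ y ≠ g₂ y) :
    InvOn (unstraighten b g₁ g₂) (straighten b g₁ g₂) (region g₁ g₂ S) (Icc 0 b ×ˢ S) := by
  constructor
  · rintro ⟨x, y⟩ ⟨hy, -⟩
    have hw : g₂ y - g₁ y ≠ 0 := sub_ne_zero.2 (hg y hy).symm
    refine Prod.ext ?_ rfl
    simp only [straighten, unstraighten]
    field_simp
    ring
  · rintro ⟨u, y⟩ ⟨-, hy⟩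
    have hw : g₂ y - g₁ y ≠ 0 := sub_ne_zero.2 (hg y hy).symm
    refine Prod.ext ?_ rfl
    simp only [straighten, unstraighten]
    field_simp
    ring

theorem continuousOn_straighten (hg₁ : ContinuousOn g₁ S) (hg₂ : ContinuousOn g₂ S)
    (hg : ∀ y ∈ S, g₁ y ≠ g₂ y) : ContinuousOn (straighten b g₁ g₂) (Prod.snd ⁻¹' S : Set (ℝ × ℝ)) := by
  have h₁ := hg₁.comp continuous_snd.continuousOn (mapsTo_preimage (Prod.snd : ℝ × ℝ → ℝ) S)
  have h₂ := hg₂.comp continuous_snd.continuousOn (mapsTo_preimage (Prod.snd : ℝ × ℝ → ℝ) S)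
  exact ((continuousOn_const.mul (continuous_fst.continuousOn.sub h₁)).div (h₂.sub h₁)
    fun p hp => sub_ne_zero.2 (hg p.2 hp).symm).prodMk continuous_snd.continuousOn

theorem continuousOn_unstraighten (hg₁ : ContinuousOn g₁ S) (hg₂ : ContinuousOn g₂ S) :
    ContinuousOn (unstraighten b g₁ g₂) (Prod.snd ⁻¹' S : Set (ℝ × ℝ)) := by
  have h₁ := hg₁.comp continuous_snd.continuousOn (mapsTo_preimage (Prod.snd : ℝ × ℝ → ℝ) S)
  have h₂ := hg₂.comp continuous_snd.continuousOn (mapsTo_preimage (Prod.snd : ℝ × ℝ → ℝ) S)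
  exact (h₁.add ((continuous_fst.continuousOn.mul (h₂.sub h₁)).div_const b)).prodMk
    continuous_snd.continuousOn

noncomputable def homeomorph (hb : 0 < b) (hg₁ : ContinuousOn g₁ S) (hg₂ : ContinuousOn g₂ S)
    (hg : ∀ y ∈ S, g₁ y < g₂ y) : region g₁ g₂ S ≃ₜ (Icc 0 b ×ˢ S : Set (ℝ × ℝ)) :=
  (invOn_unstraighten hb.ne' fun y hy => (hg y hy).ne).homeomorph
    (mapsTo_straighten hb.le hg) (mapsTo_unstraighten hb fun y hy => (hg y hy).le)
    ((continuousOn_straighten hg₁ hg₂ fun y hy => (hg y hy).ne).mono fun _ hp => hp.1)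
    ((continuousOn_unstraighten hg₁ hg₂).mono fun _ hp => hp.2)

theorem hasDerivWithinAt_straighten_fst (x y : ℝ) (s : Set ℝ) :
    HasDerivWithinAt (fun t => straighten b g₁ g₂ (t, y)) (b / (g₂ y - g₁ y), 0) s x := by
  have h := (((hasDerivWithinAt_id x s).sub_const (g₁ y)).const_mul b).div_const (g₂ y - g₁ y)
  rw [mul_one] at h
  exact h.prodMk (hasDerivWithinAt_const x s y)

theorem hasDerivWithinAt_straighten_snd {x y d₁ d₂ : ℝ} {s : Set ℝ}
    (hd₁ : HasDerivWithinAt g₁ d₁ s y) (hd₂ : HasDerivWithinAt g₂ d₂ s y)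
    (hg : g₁ y ≠ g₂ y) :
    HasDerivWithinAt (fun t => straighten b g₁ g₂ (x, t))
      (-(b / (g₂ y - g₁ y) * ((1 - (x - g₁ y) / (g₂ y - g₁ y)) * d₁
        + (x - g₁ y) / (g₂ y - g₁ y) * d₂)), 1) s y := by
  have hw : g₂ y - g₁ y ≠ 0 := sub_ne_zero.2 hg.symm
  have h : HasDerivWithinAt (fun t => b * (x - g₁ t) / (g₂ t - g₁ t))
      ((b * (0 - d₁) * (g₂ y - g₁ y) - b * (x - g₁ y) * (d₂ - d₁)) / (g₂ y - g₁ y) ^ 2) s y :=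
    (((hasDerivWithinAt_const y s x).sub hd₁).const_mul b).div (hd₂.sub hd₁) hw
  refine (h.congr_deriv ?_).prodMk (hasDerivWithinAt_id y s)
  field_simp
  ring

end Straighten

theorem abs_one_sub_mul_add_mul_le {t u v ε : ℝ} (ht : t ∈ Icc 0 1) (hu : |u| ≤ ε)
    (hv : |v| ≤ ε) : |(1 - t) * u + t * v| ≤ ε :=
  abs_le.2 <| convex_Icc (-ε) ε (abs_le.1 hu) (abs_le.1 hv) (sub_nonneg.2 ht.2) ht.1
    (sub_add_cancel 1 t)

theorem abs_div_sqrt_sq_add_one_sub_one_le (s e : ℝ) :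
    |s / √(e ^ 2 + 1) - 1| ≤ |s - 1| + e ^ 2 / 2 := by
  set q := √(e ^ 2 + 1)
  have hq₁ : 1 ≤ q := Real.one_le_sqrt.2 (by nlinarith [sq_nonneg e])
  have hq₂ : q ≤ 1 + e ^ 2 / 2 :=
    Real.sqrt_le_iff.2 ⟨by positivity, by nlinarith [sq_nonneg (e ^ 2)]⟩
  have hq₀ : 0 < q := by linarith
  have hsplit : s / q - 1 = (s - 1) / q + (1 - q) / q := by field_simp; ring
  calc |s / q - 1| ≤ |s - 1| / q + |1 - q| / q := by
        rw [hsplit]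
        simpa only [abs_div, abs_of_pos hq₀] using abs_add_le ((s - 1) / q) ((1 - q) / q)
    _ ≤ |s - 1| + |1 - q| := by
        gcongr <;> exact div_le_self (abs_nonneg _) hq₁
    _ ≤ |s - 1| + e ^ 2 / 2 := by
        rw [abs_sub_comm 1 q, abs_of_nonneg (by linarith : 0 ≤ q - 1)]; linarith

theorem abs_div_sqrt_sub_one_le_and_abs_mul_le {ε s m : ℝ} (hε : 0 ≤ ε) (hε₂ : ε ≤ 1 / 2)
    (hs : |s - 1| ≤ ε) (hm : |m| ≤ ε) :
    |s / √((s * m) ^ 2 + 1) - 1| ≤ 3 * ε ∧ |s * (s * m)| ≤ 3 * ε := by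
  have hs' : |s| ≤ 3 / 2 := by
    have := abs_sub_abs_le_abs_sub s 1
    rw [abs_one] at this; linarith
  have hsm : |s * m| ≤ 3 / 2 * ε := by
    rw [abs_mul]; exact mul_le_mul hs' hm (abs_nonneg m) (by norm_num)
  constructor
  · have h := abs_div_sqrt_sq_add_one_sub_one_le s (s * m)
    have hsq : (s * m) ^ 2 ≤ (3 / 2 * ε) ^ 2 := sq_le_sq' (abs_le.1 hsm).1 (abs_le.1 hsm).2
    nlinarith
  · calc |s * (s * m)| = |s| * |s * m| := abs_mul _ _
      _ ≤ 3 / 2 * (3 / 2 * ε) := mul_le_mul hs' hsm (abs_nonneg _) (by norm_num)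
      _ ≤ 3 * ε := by linarith

/-- Lemma 4.3 (lem:qcstraight): the horizontal straightening map of a region
bounded by two horizontal segments and two C¹ graphs `x = g₁(y)`, `x = g₂(y)`
is a height-preserving homeomorphism onto a Euclidean rectangle, and at every
height where the graphs are ε-almost-vertical and the width is ε-close to `b`,
its partial derivatives satisfy `|‖f_x‖/‖f_y‖ − 1| ≤ Cε` and `|⟨f_x, f_y⟩| ≤ Cε`
for a universal constant `C > 0`. -/
theorem stmt_1 :
    ∃ C > (0 : ℝ), ∀ (a ε : ℝ) (g₁ g₂ : ℝ → ℝ),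
      0 < a → 0 < ε → ε ≤ 1 / 2 →
      ContDiffOn ℝ 1 g₁ (Icc 0 a) → ContDiffOn ℝ 1 g₂ (Icc 0 a) →
      (∀ y ∈ Icc (0 : ℝ) a, 0 < g₁ y ∧ g₁ y < g₂ y) →
      ∀ b : ℝ, IsLUB ((fun y => g₂ y - g₁ y) '' Icc 0 a) b →
      ∀ R : Set (ℝ × ℝ),
        R = {p : ℝ × ℝ | p.2 ∈ Icc 0 a ∧ p.1 ∈ Icc (g₁ p.2) (g₂ p.2)} →
      ∀ f : ℝ × ℝ → ℝ × ℝ,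
        f = (fun p => (b * (p.1 - g₁ p.2) / (g₂ p.2 - g₁ p.2), p.2)) →
        -- f is a homeomorphism of R onto the rectangle [0,b] × [0,a]
        (∃ e : ↥R ≃ₜ ↥(Icc (0 : ℝ) b ×ˢ Icc (0 : ℝ) a),
            ∀ p : ↥R, (e p : ℝ × ℝ) = f ↑p) ∧
        -- f is height-preserving
        (∀ p ∈ R, (f p).2 = p.2) ∧
        -- partial derivative bounds at good heights
        (∀ x y : ℝ, (x, y) ∈ R →
          |derivWithin g₁ (Icc 0 a) y| ≤ ε →
          |derivWithin g₂ (Icc 0 a) y| ≤ ε →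
          |b / (g₂ y - g₁ y) - 1| ≤ ε →
          ∃ fx fy : ℝ × ℝ,
            HasDerivWithinAt (fun t => f (t, y)) fx (Icc (g₁ y) (g₂ y)) x ∧
            HasDerivWithinAt (fun t => f (x, t)) fy (Icc 0 a) y ∧
            |Real.sqrt (fx.1 ^ 2 + fx.2 ^ 2) / Real.sqrt (fy.1 ^ 2 + fy.2 ^ 2) - 1|
              ≤ C * ε ∧
            |fx.1 * fy.1 + fx.2 * fy.2| ≤ C * ε) := by
  refine ⟨3, by norm_num, ?_⟩
  rintro a ε g₁ g₂ - hε hε₂ hg₁ hg₂ hg b hb R rfl f rfl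
  have hlt : ∀ y ∈ Icc (0 : ℝ) a, g₁ y < g₂ y := fun y hy => (hg y hy).2
  have hb_pos : 0 < b := by
    obtain ⟨_, y, hy, rfl⟩ := hb.nonempty
    exact (sub_pos.2 (hlt y hy)).trans_le (hb.1 ⟨y, hy, rfl⟩)
  refine ⟨⟨Straighten.homeomorph hb_pos hg₁.continuousOn hg₂.continuousOn hlt, fun _ => rfl⟩,
    fun _ _ => rfl, ?_⟩
  rintro x y ⟨hy, hx₁, hx₂⟩ hd₁ hd₂ hs
  have hderiv : ∀ g : ℝ → ℝ, ContDiffOn ℝ 1 g (Icc 0 a) →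
      HasDerivWithinAt g (derivWithin g (Icc 0 a) y) (Icc 0 a) y :=
    fun g hg => (hg.differentiableOn one_ne_zero y hy).hasDerivWithinAt
  have hw : 0 < g₂ y - g₁ y := sub_pos.2 (hlt y hy)
  have ht : (x - g₁ y) / (g₂ y - g₁ y) ∈ Icc (0 : ℝ) 1 :=
    ⟨div_nonneg (by linarith) hw.le, div_le_one_of_le₀ (by linarith) hw.le⟩
  obtain ⟨hratio, hinner⟩ :=
    abs_div_sqrt_sub_one_le_and_abs_mul_le hε.le hε₂ hs (abs_one_sub_mul_add_mul_le ht hd₁ hd₂)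
  refine ⟨_, _, Straighten.hasDerivWithinAt_straighten_fst x y _,
    Straighten.hasDerivWithinAt_straighten_snd (hderiv g₁ hg₁) (hderiv g₂ hg₂) (hlt y hy).ne,
    ?_, ?_⟩
  · simpa [Real.sqrt_sq (div_pos hb_pos hw).le] using hratio
  · simpa using hinner
end

section
/- Let c ∈ ℂ, c ≠ 0, and let g be holomorphic and injective on an open subset of ℂ containing the closed unit disk, with g(0) = 0 and g′(0) = c. Then there exist universal constants C > 0 and ε₀ > 0 such that for every ε ∈ (0, ε₀] there exist s ∈ (0, 1) and a map G from the closed unit disk onto g(closed unit disk) such that: (1) G is a homeomorphism onto g(closed unit disk), continuously real-differentiable on the open unit disk, with ‖∂̄G(z)‖ ≤ Cε·‖∂G(z)‖ for all |z| < 1; (2) G(z) = c·z for all |z| ≤ s; (3) G(z) = g(z) for all |z| = 1. -/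
/-!
Near `0` the map `h z := g⁻¹ (c z)` is holomorphic with `h 0 = 0` and `h' 0 = 1`, so on a small
disk `‖z‖ < r` it is `δ`-close to the identity in `C¹`. With a cutoff `χ` equal to `1` on
`‖z‖ ≤ r / 2`, vanishing on `‖z‖ ≥ r` and with gradient `O(1 / r)`, the map
`Φ := id + χ • (h - id)` satisfies `‖DΦ - id‖ ≤ δ + O(1 / r) · δ r = O(δ)`. Hence `Φ` is a
bijection of the closed unit disk that is the identity near its boundary, and `G := g ∘ Φ` agrees
with `g ∘ h = (c * ·)` near `0` and with `g` on the unit circle; since `g` is conformal, the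
dilatation of `G` is that of `Φ`, which is `O(δ)`.
-/

open Metric Complex Filter Topology Set

/-- For `L = DG(z)` these are the Wirtinger derivatives `∂G(z)` and `∂̄G(z)`. -/
noncomputable def dz (L : ℂ →L[ℝ] ℂ) : ℂ := (L 1 - I * L I) / 2

noncomputable def dzbar (L : ℂ →L[ℝ] ℂ) : ℂ := (L 1 + I * L I) / 2

lemma norm_dz_le (L : ℂ →L[ℝ] ℂ) : ‖dz L‖ ≤ ‖L‖ := by
  have h1 := L.le_opNorm 1
  have hI := L.le_opNorm I
  simp only [norm_one, norm_I, mul_one] at h1 hI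
  rw [dz, norm_div, RCLike.norm_ofNat, div_le_iff₀ two_pos]
  calc ‖L 1 - I * L I‖ ≤ ‖L 1‖ + ‖I * L I‖ := norm_sub_le _ _
    _ ≤ ‖L‖ * 2 := by rw [norm_mul, norm_I, one_mul]; linarith

lemma norm_dzbar_le (L : ℂ →L[ℝ] ℂ) : ‖dzbar L‖ ≤ ‖L‖ := by
  have h1 := L.le_opNorm 1
  have hI := L.le_opNorm I
  simp only [norm_one, norm_I, mul_one] at h1 hI
  rw [dzbar, norm_div, RCLike.norm_ofNat, div_le_iff₀ two_pos]
  calc ‖L 1 + I * L I‖ ≤ ‖L 1‖ + ‖I * L I‖ := norm_add_le _ _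
    _ ≤ ‖L‖ * 2 := by rw [norm_mul, norm_I, one_mul]; linarith

lemma dz_id_add (M : ℂ →L[ℝ] ℂ) : dz (.id ℝ ℂ + M) = 1 + dz M := by
  simp only [dz, add_apply, ContinuousLinearMap.id_apply]
  linear_combination (-1 / 2 : ℂ) * I_mul_I

lemma dzbar_id_add (M : ℂ →L[ℝ] ℂ) : dzbar (.id ℝ ℂ + M) = dzbar M := by
  simp only [dzbar, add_apply, ContinuousLinearMap.id_apply]
  linear_combination (1 / 2 : ℂ) * I_mul_I

theorem ContinuousLinearMap.apply_eq_mul_apply_one {R : Type*} [CommSemiring R]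
    [TopologicalSpace R] (A : R →L[R] R) (w : R) : A w = w * A 1 := by
  rw [← smul_eq_mul, ← A.map_smul, smul_eq_mul, mul_one]

lemma dz_comp (A : ℂ →L[ℂ] ℂ) (L : ℂ →L[ℝ] ℂ) :
    dz ((A.restrictScalars ℝ).comp L) = A 1 * dz L := by
  simp only [dz, ContinuousLinearMap.comp_apply, ContinuousLinearMap.coe_restrictScalars',
    A.apply_eq_mul_apply_one (L _)]
  ring

lemma dzbar_comp (A : ℂ →L[ℂ] ℂ) (L : ℂ →L[ℝ] ℂ) :
    dzbar ((A.restrictScalars ℝ).comp L) = A 1 * dzbar L := by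
  simp only [dzbar, ContinuousLinearMap.comp_apply, ContinuousLinearMap.coe_restrictScalars',
    A.apply_eq_mul_apply_one (L _)]
  ring

lemma norm_dzbar_id_add_le {M : ℂ →L[ℝ] ℂ} {η : ℝ} (hη : η ≤ 1 / 2) (hM : ‖M‖ ≤ η) :
    ‖dzbar (.id ℝ ℂ + M)‖ ≤ 2 * η * ‖dz (.id ℝ ℂ + M)‖ := by
  have hdz : 1 / 2 ≤ ‖dz (.id ℝ ℂ + M)‖ := by
    have := norm_sub_norm_le (1 : ℂ) (-dz M)
    rw [norm_one, norm_neg, sub_neg_eq_add, ← dz_id_add] at this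
    linarith [norm_dz_le M]
  have hη0 : 0 ≤ η := (norm_nonneg _).trans hM
  calc ‖dzbar (.id ℝ ℂ + M)‖ = ‖dzbar M‖ := by rw [dzbar_id_add]
    _ ≤ η := (norm_dzbar_le M).trans hM
    _ ≤ 2 * η * ‖dz (.id ℝ ℂ + M)‖ := by nlinarith

/-- Postcomposing with a holomorphic map does not change the dilatation. -/
lemma norm_dzbar_fderiv_comp_id_add_le {g ψ : ℂ → ℂ} {z : ℂ} {η : ℝ}
    (hg : DifferentiableAt ℂ g (z + ψ z)) (hψ : DifferentiableAt ℝ ψ z) (hη : η ≤ 1 / 2)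
    (hψη : ‖fderiv ℝ ψ z‖ ≤ η) :
    ‖dzbar (fderiv ℝ (fun w => g (w + ψ w)) z)‖ ≤
      2 * η * ‖dz (fderiv ℝ (fun w => g (w + ψ w)) z)‖ := by
  have hΦ : HasFDerivAt (fun w => w + ψ w) (.id ℝ ℂ + fderiv ℝ ψ z) z :=
    (hasFDerivAt_id z).add hψ.hasFDerivAt
  rw [← Function.comp_def g, fderiv_comp z (hg.restrictScalars ℝ) hΦ.differentiableAt,
    hg.fderiv_restrictScalars ℝ, hΦ.fderiv, dzbar_comp, dz_comp, norm_mul, norm_mul]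
  have := norm_dzbar_id_add_le hη hψη
  have := norm_nonneg (fderiv ℂ g (z + ψ z) 1)
  nlinarith

theorem Function.Bijective.bijOn_of_eqOn_compl {α : Type*} {f : α → α} {S T : Set α}
    (hf : Function.Bijective f) (hTS : T ⊆ S) (hfix : EqOn f id Tᶜ) : BijOn f S S := by
  refine ⟨fun x hx => ?_, hf.injective.injOn, fun y hy => ?_⟩
  · by_cases hfx : f x ∈ T
    · exact hTS hfx
    · rwa [hf.injective (hfix hfx)]
  · obtain ⟨x, rfl⟩ := hf.surjective y
    by_cases hx : x ∈ T
    · exact ⟨x, hTS hx, rfl⟩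
    · have hfx : f x = x := hfix hx
      exact ⟨x, hfx ▸ hy, rfl⟩

theorem LipschitzWith.bijective_id_add {E : Type*} [NormedAddCommGroup E] [NormedSpace ℝ E]
    [CompleteSpace E] {ψ : E → E} {k : NNReal} (hψ : LipschitzWith k ψ) (hk : k < 1) :
    Function.Bijective fun x => x + ψ x := by
  have happrox : ApproximatesLinearOn (fun x => x + ψ x) (ContinuousLinearEquiv.refl ℝ E : E →L[ℝ] E)
      univ k := by
    refine ApproximatesLinearOn.approximatesLinearOn_iff_lipschitzOnWith.2 ?_
    convert hψ.lipschitzOnWith (s := univ) using 1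
    ext x; simp
  have hc : Subsingleton E ∨ k < ‖((ContinuousLinearEquiv.refl ℝ E).symm : E →L[ℝ] E)‖₊⁻¹ := by
    rcases subsingleton_or_nontrivial E with hE | hE
    · exact .inl hE
    · right; simpa using hk
  exact ⟨injOn_univ.1 (happrox.injOn hc), happrox.surjective hc⟩

theorem bijOn_closedBall_id_add {E : Type*} [NormedAddCommGroup E] [NormedSpace ℝ E]
    [CompleteSpace E] {ψ : E → E} {η ρ R : ℝ} (hψ : Differentiable ℝ ψ)
    (hψ' : ∀ x, ‖fderiv ℝ ψ x‖ ≤ η) (hη : η < 1) (hψρ : ∀ x, ρ ≤ ‖x‖ → ψ x = 0) (hρR : ρ ≤ R) :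
    BijOn (fun x => x + ψ x) (closedBall 0 R) (closedBall 0 R) := by
  have hη0 : 0 ≤ η := (norm_nonneg _).trans (hψ' 0)
  have hlip : LipschitzWith η.toNNReal ψ := lipschitzWith_of_nnnorm_fderiv_le hψ
    fun x => (Real.le_toNNReal_iff_coe_le hη0).2 (hψ' x)
  refine (hlip.bijective_id_add (Real.toNNReal_lt_one.2 hη)).bijOn_of_eqOn_compl
    (ball_subset_closedBall.trans (closedBall_subset_closedBall hρR)) fun x hx => ?_
  simp [hψρ x (not_lt.1 (mem_ball_zero_iff.not.1 hx))]

theorem exists_cutoff_norm_fderiv_le (E : Type*) [NormedAddCommGroup E] [NormedSpace ℝ E]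
    [FiniteDimensional ℝ E] :
    ∃ K ≥ 0, ∀ r > 0, ∃ χ : E → ℝ, ContDiff ℝ 1 χ ∧ (∀ x, ‖x‖ ≤ r / 2 → χ x = 1) ∧
      (∀ x, r ≤ ‖x‖ → χ x = 0) ∧ (∀ x, |χ x| ≤ 1) ∧ ∀ x, ‖fderiv ℝ χ x‖ ≤ K / r := by
  let b : ContDiffBump (0 : E) := ⟨1 / 2, 1, by norm_num, by norm_num⟩
  have hb : ContDiff ℝ 1 b := b.contDiff
  obtain ⟨K, hK⟩ := (hb.continuous_fderiv one_ne_zero).bounded_above_of_compact_support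
    (b.hasCompactSupport.fderiv ℝ)
  refine ⟨K, (norm_nonneg _).trans (hK 0), fun r hr => ⟨fun x => b (r⁻¹ • x),
    hb.comp (contDiff_id.const_smul r⁻¹), fun x hx => b.one_of_mem_closedBall ?_,
    fun x hx => b.zero_of_le_dist ?_, fun x => (abs_of_nonneg b.nonneg).trans_le b.le_one,
    fun x => ?_⟩⟩
  · rw [mem_closedBall_zero_iff, norm_smul, norm_inv, Real.norm_of_nonneg hr.le,
      inv_mul_le_iff₀ hr]
    show ‖x‖ ≤ r * (1 / 2)
    linarith
  · rw [dist_zero_right, norm_smul, norm_inv, Real.norm_of_nonneg hr.le, le_inv_mul_iff₀ hr]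
    show r * 1 ≤ ‖x‖
    linarith
  · rw [fderiv_comp_smul, norm_smul, norm_inv, Real.norm_of_nonneg hr.le, div_eq_inv_mul]
    exact mul_le_mul_of_nonneg_left (hK _) (inv_nonneg.2 hr.le)

section CutoffProduct

variable {E F : Type*} [NormedAddCommGroup E] [NormedAddCommGroup F] [NormedSpace ℝ F]
  {χ : E → ℝ} {q : E → F} {r r₀ : ℝ}

theorem norm_fderiv_smul_le [NormedSpace ℝ E] {x : E} (hχ : DifferentiableAt ℝ χ x)
    (hq : DifferentiableAt ℝ q x) :
    ‖fderiv ℝ (fun y => χ y • q y) x‖ ≤ |χ x| * ‖fderiv ℝ q x‖ + ‖fderiv ℝ χ x‖ * ‖q x‖ := by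
  rw [fderiv_fun_smul hχ hq]
  refine (norm_add_le _ _).trans (add_le_add ?_ ?_)
  · rw [norm_smul, Real.norm_eq_abs]
  · rw [ContinuousLinearMap.norm_smulRight_apply]

theorem smul_eventuallyEq_zero_of_lt_norm (hχ0 : ∀ x, r ≤ ‖x‖ → χ x = 0) {x : E}
    (hx : r < ‖x‖) : (fun y => χ y • q y) =ᶠ[𝓝 x] 0 := by
  filter_upwards [(isOpen_lt continuous_const continuous_norm).mem_nhds hx] with y hy
  simp [hχ0 y hy.le]

theorem contDiff_smul_of_contDiffOn_ball [NormedSpace ℝ E] (hχ : ContDiff ℝ 1 χ)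
    (hχ0 : ∀ x, r ≤ ‖x‖ → χ x = 0) (hq : ContDiffOn ℝ 1 q (ball 0 r₀)) (hrr₀ : r < r₀) :
    ContDiff ℝ 1 fun y => χ y • q y := by
  refine contDiff_iff_contDiffAt.2 fun x => ?_
  rcases lt_or_ge ‖x‖ r₀ with hx | hx
  · exact hχ.contDiffAt.smul (hq.contDiffAt (isOpen_ball.mem_nhds (mem_ball_zero_iff.2 hx)))
  · exact contDiffAt_const.congr_of_eventuallyEq
      (smul_eventuallyEq_zero_of_lt_norm hχ0 (hrr₀.trans_le hx))

/-- The gradient `K / r` of the cutoff is compensated by `q = O(δ r)` on its support. -/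
theorem norm_fderiv_smul_le_of_ball [NormedSpace ℝ E] {K δ : ℝ} (hK : 0 ≤ K) (hδ : 0 ≤ δ)
    (hr : 0 < r) (hrr₀ : r < r₀) (hχ : ContDiff ℝ 1 χ) (hχ0 : ∀ x, r ≤ ‖x‖ → χ x = 0)
    (hχ1 : ∀ x, |χ x| ≤ 1) (hχ' : ∀ x, ‖fderiv ℝ χ x‖ ≤ K / r)
    (hq : ∀ x ∈ ball (0 : E) r₀,
      DifferentiableAt ℝ q x ∧ ‖fderiv ℝ q x‖ ≤ δ ∧ ‖q x‖ ≤ δ * ‖x‖) (x : E) :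
    ‖fderiv ℝ (fun y => χ y • q y) x‖ ≤ (1 + K) * δ := by
  rcases le_or_gt ‖x‖ r with hx | hx
  · obtain ⟨hqd, hq', hqx⟩ := hq x (mem_ball_zero_iff.2 (hx.trans_lt hrr₀))
    calc ‖fderiv ℝ (fun y => χ y • q y) x‖
        ≤ |χ x| * ‖fderiv ℝ q x‖ + ‖fderiv ℝ χ x‖ * ‖q x‖ :=
          norm_fderiv_smul_le (hχ.differentiable one_ne_zero x) hqd
      _ ≤ 1 * δ + K / r * (δ * r) :=
          add_le_add (mul_le_mul (hχ1 x) hq' (norm_nonneg _) zero_le_one)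
            (mul_le_mul (hχ' x) (hqx.trans (by gcongr)) (norm_nonneg _) (by positivity))
      _ = (1 + K) * δ := by field_simp
  · rw [(smul_eventuallyEq_zero_of_lt_norm hχ0 hx).fderiv_eq, Pi.zero_def, fderiv_const_apply,
      norm_zero]
    positivity

end CutoffProduct

theorem AnalyticAt.exists_analyticAt_comp_eq_mul {𝕜 : Type*} [NontriviallyNormedField 𝕜]
    [CompleteSpace 𝕜] [CharZero 𝕜] {g : 𝕜 → 𝕜} (hg : AnalyticAt 𝕜 g 0) (hg0 : g 0 = 0)
    (hc : deriv g 0 ≠ 0) :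
    ∃ h : 𝕜 → 𝕜, AnalyticAt 𝕜 h 0 ∧ h 0 = 0 ∧ deriv h 0 = 1 ∧
      ∀ᶠ z in 𝓝 0, g (h z) = deriv g 0 * z := by
  set c := deriv g 0
  set φ := hg.hasStrictDerivAt.localInverse g c 0 hc
  have hφ0 : φ 0 = 0 := by
    simpa [hg0] using
      HasStrictFDerivAt.localInverse_apply_image (hg.hasStrictDerivAt.hasStrictFDerivAt_equiv hc)
  have hφ : HasDerivAt φ c⁻¹ 0 := hg0 ▸ (hg.hasStrictDerivAt.to_localInverse hc).hasDerivAt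
  have hmul : Tendsto (c * ·) (𝓝 0) (𝓝 (g 0)) :=
    (continuous_const_mul c).tendsto' 0 (g 0) (by simp [hg0])
  refine ⟨fun z => φ (c * z), ?_, by simpa using hφ0, ?_,
    hmul.eventually (hg.hasStrictDerivAt.eventually_right_inverse hc)⟩
  · exact (hg0 ▸ hg.analyticAt_localInverse hc).comp_of_eq (analyticAt_const.mul analyticAt_id)
      (mul_zero c)
  · have := (mul_zero c).symm ▸ hφ
    simpa [Function.comp_def, hc] using (this.comp 0 ((hasDerivAt_id 0).const_mul c)).deriv

theorem AnalyticAt.exists_ball_norm_fderiv_sub_id_le {h : ℂ → ℂ} (hh : AnalyticAt ℂ h 0)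
    (hh0 : h 0 = 0) (hh' : deriv h 0 = 1) {δ : ℝ} (hδ : 0 < δ) :
    ∃ r > 0, ∀ z ∈ ball (0 : ℂ) r, ContDiffAt ℝ 1 (fun w => h w - w) z ∧
      ‖fderiv ℝ (fun w => h w - w) z‖ ≤ δ ∧ ‖h z - z‖ ≤ δ * ‖z‖ := by
  have hev : ∀ᶠ z in 𝓝 0, AnalyticAt ℂ h z ∧ ‖deriv h z - 1‖ ≤ δ := by
    refine hh.eventually_analyticAt.and ?_
    have hcont := hh.deriv.continuousAt.tendsto
    rw [hh'] at hcont
    filter_upwards [hcont (closedBall_mem_nhds 1 hδ)] with z hz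
    rwa [mem_preimage, mem_closedBall, dist_eq_norm] at hz
  obtain ⟨r, hr, hball⟩ := eventually_nhds_iff_ball.1 hev
  have hq : ∀ z ∈ ball (0 : ℂ) r, HasDerivAt (fun w => h w - w) (deriv h z - 1) z :=
    fun z hz => (hball z hz).1.differentiableAt.hasDerivAt.sub (hasDerivAt_id z)
  refine ⟨r, hr, fun z hz =>
    ⟨((hball z hz).1.contDiffAt.restrict_scalars ℝ).sub contDiffAt_id, ?_, ?_⟩⟩
  · rw [((hq z hz).hasFDerivAt.restrictScalars ℝ).fderiv,
      ContinuousLinearMap.norm_restrictScalars, ContinuousLinearMap.norm_toSpanSingleton]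
    exact (hball z hz).2
  · simpa [hh0] using (convex_ball (0 : ℂ) r).norm_image_sub_le_of_norm_deriv_le
      (fun w hw => (hq w hw).differentiableAt) (fun w hw => (hq w hw).deriv ▸ (hball w hw).2)
      (mem_ball_self hr) hz

theorem AnalyticAt.exists_interpolation_id {h : ℂ → ℂ} (hh : AnalyticAt ℂ h 0) (hh0 : h 0 = 0)
    (hh' : deriv h 0 = 1) {η ρ : ℝ} (hη : 0 < η) (hρ : 0 < ρ) :
    ∃ s, 0 < s ∧ s < ρ ∧ ∃ ψ : ℂ → ℂ, ContDiff ℝ 1 ψ ∧ (∀ z, ‖fderiv ℝ ψ z‖ ≤ η) ∧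
      (∀ z, ‖z‖ ≤ s → z + ψ z = h z) ∧ ∀ z, ρ ≤ ‖z‖ → ψ z = 0 := by
  obtain ⟨K, hK, hcut⟩ := exists_cutoff_norm_fderiv_le ℂ
  have hδ : 0 < η / (1 + K) := by positivity
  obtain ⟨r₀, hr₀, hball⟩ := hh.exists_ball_norm_fderiv_sub_id_le hh0 hh' hδ
  obtain ⟨r, hr, hrr₀, hrρ⟩ : ∃ r, 0 < r ∧ r < r₀ ∧ r < ρ :=
    ⟨min r₀ ρ / 2, by positivity, by linarith [min_le_left r₀ ρ, lt_min hr₀ hρ],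
      by linarith [min_le_right r₀ ρ, lt_min hr₀ hρ]⟩
  obtain ⟨χ, hχ, hχ1, hχ0, hχ_abs, hχ'⟩ := hcut r hr
  refine ⟨r / 2, by positivity, by linarith, fun z => χ z • (h z - z),
    contDiff_smul_of_contDiffOn_ball hχ hχ0
      (fun z hz => (hball z hz).1.contDiffWithinAt) hrr₀,
    fun z => ?_, fun z hz => ?_, fun z hz => ?_⟩
  · calc _ ≤ (1 + K) * (η / (1 + K)) := norm_fderiv_smul_le_of_ball hK hδ.le hr hrr₀ hχ hχ0
          hχ_abs hχ' (fun x hx => ⟨(hball x hx).1.differentiableAt one_ne_zero, (hball x hx).2⟩) z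
      _ = η := by field_simp
  · simp only [hχ1 z (by linarith), one_smul, add_sub_cancel]
  · simp [hχ0 z (by linarith)]

/-- Disk form of the key step in Lemma 5.2 (lem:conf1): a univalent map `g` of a
neighbourhood of the closed unit disk with `g(0) = 0` and `g′(0) = c ≠ 0` can be
interpolated with the dilation `z ↦ c·z` near the origin: there are universal
constants `C > 0`, `ε₀ > 0` such that for every `ε ∈ (0, ε₀]` there are
`s ∈ (0,1)` and a homeomorphism `G` of the closed disk onto `g(closed disk)`,
continuously real-differentiable inside, with `‖∂̄G‖ ≤ Cε·‖∂G‖`, equal to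
`z ↦ c·z` on `|z| ≤ s` and to `g` on `|z| = 1`. -/
theorem stmt_8 :
    ∃ C > (0 : ℝ), ∃ ε₀ > (0 : ℝ),
      ∀ (c : ℂ), c ≠ 0 →
      ∀ (g : ℂ → ℂ) (U : Set ℂ), IsOpen U → closedBall (0 : ℂ) 1 ⊆ U →
        DifferentiableOn ℂ g U → Set.InjOn g U → g 0 = 0 → deriv g 0 = c →
        ∀ ε : ℝ, 0 < ε → ε ≤ ε₀ →
          ∃ s : ℝ, 0 < s ∧ s < 1 ∧
          ∃ G : ℂ → ℂ,
            ContinuousOn G (closedBall 0 1) ∧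
            Set.BijOn G (closedBall 0 1) (g '' closedBall 0 1) ∧
            ContDiffOn ℝ 1 G (ball 0 1) ∧
            (∀ z ∈ ball (0 : ℂ) 1,
              ‖(fderiv ℝ G z) 1 + Complex.I * (fderiv ℝ G z) Complex.I‖ / 2 ≤
                C * ε * (‖(fderiv ℝ G z) 1 - Complex.I * (fderiv ℝ G z) Complex.I‖ / 2)) ∧
            (∀ z : ℂ, ‖z‖ ≤ s → G z = c * z) ∧
            (∀ z : ℂ, ‖z‖ = 1 → G z = g z) := by
  refine ⟨2, two_pos, 1 / 2, by norm_num, fun c hc g U hU hsub hg hinj hg0 hgd ε hε hε₀ => ?_⟩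
  have hgU : ∀ w ∈ U, AnalyticAt ℂ g w := fun w hw => hg.analyticAt (hU.mem_nhds hw)
  obtain ⟨h, hh, hh0, hh', hgh⟩ :=
    (hgU 0 (hsub (mem_closedBall_self zero_le_one))).exists_analyticAt_comp_eq_mul hg0 (hgd ▸ hc)
  obtain ⟨ρ, hρ, hghρ⟩ := eventually_nhds_iff_ball.1 hgh
  obtain ⟨s, hs, hsρ, ψ, hψ, hψ', hψs, hψρ⟩ :=
    hh.exists_interpolation_id hh0 hh' hε (lt_min hρ one_pos)
  have hψd := hψ.differentiable one_ne_zero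
  have hΦ : BijOn (fun z => z + ψ z) (closedBall 0 1) (closedBall 0 1) :=
    bijOn_closedBall_id_add hψd hψ' (by linarith) hψρ (min_le_right _ _)
  have hΦU := hΦ.mapsTo.mono_right hsub
  refine ⟨s, hs, hsρ.trans_le (min_le_right _ _), fun z => g (z + ψ z),
    hg.continuousOn.comp (continuous_id.add hψd.continuous).continuousOn hΦU,
    (hinj.mono hsub).bijOn_image.comp hΦ,
    ((hg.contDiffOn hU).restrict_scalars ℝ).comp (contDiff_id.add hψ).contDiffOn
      (hΦU.mono_left ball_subset_closedBall),
    fun z hz => ?_, fun z hz => ?_, fun z hz => ?_⟩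
  · simpa only [dz, dzbar, norm_div, RCLike.norm_ofNat] using
      norm_dzbar_fderiv_comp_id_add_le (hgU _ (hΦU (ball_subset_closedBall hz))).differentiableAt
        (hψd z) hε₀ (hψ' z)
  · show g (z + ψ z) = c * z
    rw [hψs z hz, ← hgd]
    exact hghρ z (mem_ball_zero_iff.2 (hz.trans_lt (hsρ.trans_le (min_le_left _ _))))
  · simp [hψρ z (hz ▸ min_le_right _ _)]
end

section
/- Let w, l > 0, 0 < ε ≤ 1/2, and let g₁, g₂ : [0, w] → ℝ be C¹ functions such that for all x ∈ [0, w]: g₂(x) > g₁(x) > 0, |g₁′(x)| ≤ ε, |g₂′(x)| ≤ ε, and |l/(g₂(x) − g₁(x)) − 1| ≤ ε. Let S = [0, w] × [0, l] and S′ = {(x, y) ∈ ℝ² : 0 ≤ x ≤ w, g₁(x) ≤ y ≤ g₂(x)}. Define F : S → S′ by F(x, y) = ( x, g₁(x) + (y/l)·(g₂(x) − g₁(x)) ). Then F is a homeomorphism of S onto S′ preserving the first coordinate, and there is a universal constant C > 0 such that at every point of S the partial derivatives satisfy |‖F_y‖/‖F_x‖ − 1| ≤ Cε and |⟨F_x,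 F_y⟩| ≤ Cε. -/
/-! On each vertical fibre `F` is the increasing affine map of `[0, l]` onto `[g₁ x, g₂ x]`, so it
is a continuous bijection from the compact rectangle onto `S′`, hence a homeomorphism.
With `t = y / l ∈ [0, 1]`, the partials are `F_x = (1, a)` with `a = (1 - t) g₁' + t g₂'`, so
`|a| ≤ ε` and `1 ≤ ‖F_x‖ ≤ 1 + ε`, and `F_y = (0, D)` with `D = (g₂ - g₁) / l`, whose inverse is
`ε`-close to `1`, so `D ∈ [1 - ε, 1 + 2ε]`. Both bounds then hold with `C = 2`. -/

open Set

theorem Set.BijOn.exists_homeomorph {X Y : Type*} [TopologicalSpace X] [TopologicalSpace Y]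
    [T2Space Y] {f : X → Y} {s : Set X} {t : Set Y} (h : BijOn f s t) (hs : IsCompact s)
    (hf : ContinuousOn f s) : ∃ e : s ≃ₜ t, ∀ p, (e p : Y) = f p := by
  have := isCompact_iff_compactSpace.mp hs
  exact ⟨(hf.mapsToRestrict h.mapsTo).homeoOfEquivCompactToT2 (f := h.equiv f), fun _ => rfl⟩

theorem Set.bijOn_prodMk_of_forall_bijOn {α β γ : Type*} {s : Set α} {u : Set β}
    {t : α → Set γ} {φ : α → β → γ} (h : ∀ x ∈ s, BijOn (φ x) u (t x)) :
    BijOn (fun p : α × β => (p.1, φ p.1 p.2)) (s ×ˢ u) {q | q.1 ∈ s ∧ q.2 ∈ t q.1} := by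
  refine ⟨fun p hp => ⟨hp.1, (h p.1 hp.1).mapsTo hp.2⟩, ?_, ?_⟩
  · rintro ⟨x, y⟩ ⟨hx, hy⟩ ⟨x', y'⟩ ⟨-, hy'⟩ hxy
    obtain ⟨rfl, hφ⟩ := Prod.mk.inj hxy
    exact congrArg _ ((h x hx).injOn hy hy' hφ)
  · rintro ⟨x, z⟩ ⟨hx, hz⟩
    obtain ⟨y, hy, rfl⟩ := (h x hx).surjOn hz
    exact ⟨(x, y), ⟨hx, hy⟩, rfl⟩

theorem bijOn_add_div_mul_sub_Icc {l a b : ℝ} (hl : 0 < l) (hab : a < b) :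
    BijOn (fun y => a + y / l * (b - a)) (Icc 0 l) (Icc a b) := by
  have hφ : (fun y => a + y / l * (b - a)) = ((b - a) / l * · + a) := by
    ext y; ring
  rw [hφ]
  have hslope : 0 < (b - a) / l := div_pos (sub_pos.mpr hab) hl
  have hinj : InjOn ((b - a) / l * · + a) (Icc 0 l) :=
    (StrictMono.injective fun _ _ h => by simpa using mul_lt_mul_of_pos_left h hslope).injOn
  convert hinj.bijOn_image using 1
  rw [image_affine_Icc' hslope]
  congr 1 <;> field_simp <;> ring

theorem abs_add_mul_sub_le {u v t ε : ℝ} (ht : t ∈ Icc (0 : ℝ) 1) (hu : |u| ≤ ε)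
    (hv : |v| ≤ ε) : |u + t * (v - u)| ≤ ε := by
  have hconv : u + t * (v - u) = (1 - t) * u + t * v := by ring
  rw [hconv]
  calc |(1 - t) * u + t * v| ≤ (1 - t) * |u| + t * |v| := by
        refine (abs_add_le _ _).trans_eq ?_
        rw [abs_mul, abs_mul, abs_of_nonneg (sub_nonneg.mpr ht.2), abs_of_nonneg ht.1]
    _ ≤ (1 - t) * ε + t * ε := by
        gcongr
        · exact sub_nonneg.mpr ht.2
        · exact ht.1
    _ = ε := by ring

theorem mem_Icc_of_abs_inv_sub_one_le {D ε : ℝ} (hD : 0 < D) (hε : ε ≤ 1 / 2)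
    (h : |D⁻¹ - 1| ≤ ε) : D ∈ Icc (1 - ε) (1 + 2 * ε) := by
  obtain ⟨hlo, hhi⟩ := abs_le.mp h
  -- `(1 - ε) (1 + ε) ≤ 1 ≤ (1 + 2ε) (1 - ε)` because `ε ≤ 1 / 2`
  have hε0 : 0 ≤ ε := (abs_nonneg _).trans h
  have hinv : D * D⁻¹ = 1 := mul_inv_cancel₀ hD.ne'
  constructor <;>
    nlinarith [mul_le_mul_of_nonneg_left hlo hD.le, mul_le_mul_of_nonneg_left hhi hD.le]

theorem abs_div_sqrt_one_add_sq_sub_one_le {a D ε : ℝ} (hε : ε ≤ 1)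
    (hD : D ∈ Icc (1 - ε) (1 + 2 * ε)) (ha : |a| ≤ ε) :
    |D / √(1 + a ^ 2) - 1| ≤ 2 * ε := by
  have hε0 : 0 ≤ ε := (abs_nonneg _).trans ha
  have hD0 : 0 ≤ D := (sub_nonneg.mpr hε).trans hD.1
  have hsqrt_ge : 1 ≤ √(1 + a ^ 2) := Real.one_le_sqrt.mpr (by nlinarith)
  have hsqrt_le : √(1 + a ^ 2) ≤ 1 + ε := by
    rw [Real.sqrt_le_left (by linarith)]
    nlinarith [sq_abs a, abs_nonneg a]
  rw [abs_le]
  constructor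
  · rw [le_sub_iff_add_le, le_div_iff₀ (by linarith)]
    nlinarith [hD.1]
  · have : D / √(1 + a ^ 2) ≤ D := div_le_self hD0 hsqrt_ge
    linarith [hD.2]

theorem abs_mul_le_two_mul {a D ε : ℝ} (hε : ε ≤ 1 / 2) (hD : D ∈ Icc (1 - ε) (1 + 2 * ε))
    (ha : |a| ≤ ε) : |a * D| ≤ 2 * ε := by
  have hε0 : 0 ≤ ε := (abs_nonneg _).trans ha
  have hD0 : 0 ≤ D := by linarith [hD.1]
  calc |a * D| = |a| * D := by rw [abs_mul, abs_of_nonneg hD0]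
    _ ≤ ε * (1 + 2 * ε) := mul_le_mul ha hD.2 hD0 hε0
    _ ≤ 2 * ε := by nlinarith

/-- Lemma 6.12 (lem:smooth0): the vertical straightening map
`F(x,y) = (x, g₁(x) + (y/l)·(g₂(x) − g₁(x)))` is a homeomorphism of the
rectangle `S = [0,w] × [0,l]` onto the region `S′` between the two
ε-almost-horizontal C¹ graphs `y = g₁(x)`, `y = g₂(x)`, preserving the first
coordinate, and at every point its partial derivatives satisfy
`|‖F_y‖/‖F_x‖ − 1| ≤ Cε` and `|⟨F_x, F_y⟩| ≤ Cε` for a universal `C > 0`. -/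
theorem stmt_12 :
    ∃ C > (0 : ℝ), ∀ (w l ε : ℝ) (g₁ g₂ : ℝ → ℝ),
      0 < w → 0 < l → 0 < ε → ε ≤ 1 / 2 →
      ContDiffOn ℝ 1 g₁ (Icc 0 w) → ContDiffOn ℝ 1 g₂ (Icc 0 w) →
      (∀ x ∈ Icc (0 : ℝ) w, 0 < g₁ x ∧ g₁ x < g₂ x) →
      (∀ x ∈ Icc (0 : ℝ) w, |derivWithin g₁ (Icc 0 w) x| ≤ ε) →
      (∀ x ∈ Icc (0 : ℝ) w, |derivWithin g₂ (Icc 0 w) x| ≤ ε) →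
      (∀ x ∈ Icc (0 : ℝ) w, |l / (g₂ x - g₁ x) - 1| ≤ ε) →
      ∀ S' : Set (ℝ × ℝ),
        S' = {p : ℝ × ℝ | p.1 ∈ Icc 0 w ∧ p.2 ∈ Icc (g₁ p.1) (g₂ p.1)} →
      ∀ F : ℝ × ℝ → ℝ × ℝ,
        F = (fun p => (p.1, g₁ p.1 + (p.2 / l) * (g₂ p.1 - g₁ p.1))) →
        -- F is a homeomorphism of S = [0,w] × [0,l] onto S′
        (∃ e : ↥(Icc (0 : ℝ) w ×ˢ Icc (0 : ℝ) l) ≃ₜ ↥S',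
            ∀ p : ↥(Icc (0 : ℝ) w ×ˢ Icc (0 : ℝ) l), (e p : ℝ × ℝ) = F ↑p) ∧
        -- F preserves the first coordinate
        (∀ p ∈ Icc (0 : ℝ) w ×ˢ Icc (0 : ℝ) l, (F p).1 = p.1) ∧
        -- partial derivative bounds at every point of S
        (∀ x ∈ Icc (0 : ℝ) w, ∀ y ∈ Icc (0 : ℝ) l,
          ∃ Fx Fy : ℝ × ℝ,
            HasDerivWithinAt (fun s => F (s, y)) Fx (Icc 0 w) x ∧
            HasDerivAt (fun s => F (x, s)) Fy y ∧
            |Real.sqrt (Fy.1 ^ 2 + Fy.2 ^ 2) / Real.sqrt (Fx.1 ^ 2 + Fx.2 ^ 2) - 1|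
              ≤ C * ε ∧
            |Fx.1 * Fy.1 + Fx.2 * Fy.2| ≤ C * ε) := by
  refine ⟨2, two_pos, ?_⟩
  intro w l ε g₁ g₂ _ hl _ hε hg₁ hg₂ hgap hg₁' hg₂' hratio S' hS' F hF
  subst hS' hF
  refine ⟨?_, fun _ _ => rfl, ?_⟩
  · refine (bijOn_prodMk_of_forall_bijOn fun x hx =>
      bijOn_add_div_mul_sub_Icc hl (hgap x hx).2).exists_homeomorph
      (isCompact_Icc.prod isCompact_Icc) ?_
    have hfst : MapsTo Prod.fst (Icc (0 : ℝ) w ×ˢ Icc (0 : ℝ) l) (Icc 0 w) := fun _ hp => hp.1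
    have hg₁c := hg₁.continuousOn.comp continuousOn_fst hfst
    have hg₂c := hg₂.continuousOn.comp continuousOn_fst hfst
    exact continuousOn_fst.prodMk (hg₁c.add ((continuousOn_snd.div_const l).mul (hg₂c.sub hg₁c)))
  · intro x hx y hy
    have hD : (g₂ x - g₁ x) / l ∈ Icc (1 - ε) (1 + 2 * ε) :=
      mem_Icc_of_abs_inv_sub_one_le (div_pos (sub_pos.mpr (hgap x hx).2) hl) hε
        (by rw [inv_div]; exact hratio x hx)
    have ht : y / l ∈ Icc (0 : ℝ) 1 := ⟨div_nonneg hy.1 hl.le, (div_le_one hl).mpr hy.2⟩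
    have ha := abs_add_mul_sub_le ht (hg₁' x hx) (hg₂' x hx)
    have hd₁ := (hg₁.differentiableOn one_ne_zero x hx).hasDerivWithinAt
    have hd₂ := (hg₂.differentiableOn one_ne_zero x hx).hasDerivWithinAt
    refine ⟨_, (0, (g₂ x - g₁ x) / l),
      (hasDerivWithinAt_id x _).prodMk (hd₁.add ((hd₂.sub hd₁).const_mul (y / l))), ?_, ?_, ?_⟩
    · have hvert : HasDerivAt (fun s => g₁ x + s / l * (g₂ x - g₁ x)) ((g₂ x - g₁ x) / l) y :=
        (((hasDerivAt_id y).div_const l).mul_const _).const_add _ |>.congr_deriv (by ring)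
      exact (hasDerivAt_const y x).prodMk hvert
    · simpa [Real.sqrt_sq ((sub_nonneg.mpr (by linarith)).trans hD.1)] using
        abs_div_sqrt_one_add_sq_sub_one_le (by linarith) hD ha
    · simpa using abs_mul_le_two_mul hε hD ha
end

section
/- For every N ≥ 1 there exists a constant C > 0 depending only on N with the following property: for every m ≥ 1, every matrix A with m rows and N columns all of whose entries lie in {0, 1, −1}, and every x ∈ ℝ^N with A·x = 0, there exists k ∈ ℤ^N with A·k = 0 and |xᵢ − kᵢ| ≤ C for each 1 ≤ i ≤ N. -/
/-!
Induction on the number of variables, by one step of fraction-free Gaussian elimination. If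
the integer system `A` has a nonzero coefficient `a = A i₀ j₀`, eliminating `x j₀` with the row
`i₀` leaves a system in one variable fewer whose coefficients are bounded by `2 H ^ 2`, where `H`
bounds those of `A`. The induction hypothesis, applied to the real solution `a⁻¹ • x` of the
reduced system, gives an integer solution `a • k'` within `|a| C` of the remaining coordinates of
`x`; as it is divisible by `a`, the pivot row extends it to an integer solution `k` of `A`, and the
same row bounds `|x j₀ - k j₀|` because `1 ≤ |a|`. The constants depend on `H` and on the number of
variables only, never on the number of equations.
-/

open Matrix

theorem abs_le_of_dotProduct_eq_zero {R : Type*} [CommRing R] [LinearOrder R]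
    [IsStrictOrderedRing R] {n : ℕ} {v z : Fin (n + 1) → R} {j₀ : Fin (n + 1)} {H E : R}
    (hvz : v ⬝ᵥ z = 0) (hpivot : 1 ≤ |v j₀|) (hH : ∀ j, |v j| ≤ H)
    (hE : ∀ t, |z (j₀.succAbove t)| ≤ E) : |z j₀| ≤ n * (H * E) := by
  rw [dotProduct, Fin.sum_univ_succAbove _ j₀] at hvz
  calc |z j₀| ≤ |v j₀| * |z j₀| := le_mul_of_one_le_left (abs_nonneg _) hpivot
    _ = |∑ t, v (j₀.succAbove t) * z (j₀.succAbove t)| := by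
        rw [← abs_mul, eq_neg_of_add_eq_zero_left hvz, abs_neg]
    _ ≤ ∑ t, |v (j₀.succAbove t)| * |z (j₀.succAbove t)| := by
        simpa only [abs_mul] using
          Finset.abs_sum_le_sum_abs (fun t ↦ v (j₀.succAbove t) * z (j₀.succAbove t)) Finset.univ
    _ ≤ ∑ _t : Fin n, H * E :=
        Finset.sum_le_sum fun t _ ↦
          mul_le_mul (hH _) (hE t) (abs_nonneg _) ((abs_nonneg _).trans (hH j₀))
    _ = n * (H * E) := by simp

namespace Matrix

variable {ι R : Type*} {n : ℕ}

theorem mulVec_apply_eq_add_submatrix_succAbove [NonUnitalNonAssocSemiring R]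
    (A : Matrix ι (Fin (n + 1)) R) (x : Fin (n + 1) → R) (j₀ : Fin (n + 1)) (i : ι) :
    (A *ᵥ x) i = A i j₀ * x j₀ + (A.submatrix id j₀.succAbove *ᵥ (x ∘ j₀.succAbove)) i :=
  Fin.sum_univ_succAbove _ j₀

section CommRing

variable [CommRing R] (A : Matrix ι (Fin (n + 1)) R) (i₀ : ι) (j₀ : Fin (n + 1))

def eliminateColumn : Matrix ι (Fin n) R :=
  of fun i t => A i₀ j₀ * A i (j₀.succAbove t) - A i j₀ * A i₀ (j₀.succAbove t)

theorem eliminateColumn_mulVec_succAbove (x : Fin (n + 1) → R) (i : ι) :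
    (A.eliminateColumn i₀ j₀ *ᵥ (x ∘ j₀.succAbove)) i =
      A i₀ j₀ * (A *ᵥ x) i - A i j₀ * (A *ᵥ x) i₀ := by
  have hB : (A.eliminateColumn i₀ j₀ *ᵥ (x ∘ j₀.succAbove)) i =
      A i₀ j₀ * (A.submatrix id j₀.succAbove *ᵥ (x ∘ j₀.succAbove)) i -
        A i j₀ * (A.submatrix id j₀.succAbove *ᵥ (x ∘ j₀.succAbove)) i₀ := by
    simp only [eliminateColumn, mulVec, dotProduct, of_apply, submatrix_apply, id,
      Finset.mul_sum, ← Finset.sum_sub_distrib, sub_mul, mul_assoc]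
  rw [hB, mulVec_apply_eq_add_submatrix_succAbove A x j₀ i,
    mulVec_apply_eq_add_submatrix_succAbove A x j₀ i₀]
  ring

theorem map_eliminateColumn {S : Type*} [CommRing S] (f : R →+* S) :
    (A.eliminateColumn i₀ j₀).map f = (A.map f).eliminateColumn i₀ j₀ := by
  ext i t
  simp [eliminateColumn]

theorem mulVec_eq_zero_of_eliminateColumn [IsDomain R] {x : Fin (n + 1) → R}
    (hpivot : A i₀ j₀ ≠ 0) (hrow : (A *ᵥ x) i₀ = 0)
    (hx : A.eliminateColumn i₀ j₀ *ᵥ (x ∘ j₀.succAbove) = 0) : A *ᵥ x = 0 := by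
  funext i
  have := congrFun hx i
  rw [eliminateColumn_mulVec_succAbove, hrow, mul_zero, sub_zero] at this
  exact (mul_eq_zero.mp this).resolve_left hpivot

theorem mulVec_insertNth_eq_zero_of_eliminateColumn [IsDomain R] (hpivot : A i₀ j₀ ≠ 0)
    {y : Fin n → R} (hy : A.eliminateColumn i₀ j₀ *ᵥ y = 0) :
    A *ᵥ Fin.insertNth j₀ (-(A.submatrix id j₀.succAbove *ᵥ y) i₀) (A i₀ j₀ • y) = 0 := by
  have hsucc := Fin.insertNth_comp_succAbove j₀ (-(A.submatrix id j₀.succAbove *ᵥ y) i₀)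
    (A i₀ j₀ • y)
  refine mulVec_eq_zero_of_eliminateColumn A i₀ j₀ hpivot ?_ ?_
  · rw [mulVec_apply_eq_add_submatrix_succAbove _ _ j₀, hsucc, Fin.insertNth_apply_same,
      mulVec_smul, Pi.smul_apply, smul_eq_mul]
    ring
  · rw [hsucc, mulVec_smul, hy, smul_zero]

theorem abs_eliminateColumn_apply_le [LinearOrder R] [IsStrictOrderedRing R] {H : R}
    (hA : ∀ i j, |A i j| ≤ H) (i : ι) (t : Fin n) :
    |A.eliminateColumn i₀ j₀ i t| ≤ 2 * H ^ 2 := by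
  have hH : 0 ≤ H := (abs_nonneg _).trans (hA i j₀)
  calc |A.eliminateColumn i₀ j₀ i t|
      ≤ |A i₀ j₀| * |A i (j₀.succAbove t)| + |A i j₀| * |A i₀ (j₀.succAbove t)| := by
        simpa only [eliminateColumn, of_apply, abs_mul] using
          abs_sub (A i₀ j₀ * A i (j₀.succAbove t)) (A i j₀ * A i₀ (j₀.succAbove t))
    _ ≤ H * H + H * H := by gcongr <;> apply hA
    _ = 2 * H ^ 2 := by ring

end CommRing

theorem exists_map_intCast_eq_of_mem_zero_one_neg_one {κ : Type*} {A : Matrix ι κ ℝ}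
    (hA : ∀ i j, A i j = 0 ∨ A i j = 1 ∨ A i j = -1) :
    ∃ A' : Matrix ι κ ℤ, A'.map (↑) = A ∧ ∀ i j, |A' i j| ≤ 1 := by
  have h : ∀ i j, ∃ z : ℤ, (z : ℝ) = A i j ∧ |z| ≤ 1 := fun i j ↦ by
    rcases hA i j with h | h | h
    · exact ⟨0, by simp [h]⟩
    · exact ⟨1, by simp [h]⟩
    · exact ⟨-1, by simp [h]⟩
  choose A' hA' using h
  exact ⟨A', ext fun i j ↦ (hA' i j).1, fun i j ↦ (hA' i j).2⟩

section IntKernel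

variable {κ : Type*} [Fintype κ]

theorem map_intCast_mulVec_intCast {R : Type*} [NonAssocRing R] (A : Matrix ι κ ℤ)
    (k : κ → ℤ) : A.map (↑) *ᵥ (fun j ↦ (k j : R)) = fun i ↦ ((A *ᵥ k) i : R) :=
  funext fun i ↦ (RingHom.map_mulVec (Int.castRingHom R) A k i).symm

def IntKernelNet (A : Matrix ι κ ℤ) (C : ℝ) : Prop :=
  ∀ x : κ → ℝ, A.map (↑) *ᵥ x = 0 → ∃ k : κ → ℤ, A *ᵥ k = 0 ∧ ∀ j, |x j - k j| ≤ C

namespace IntKernelNet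

variable {A : Matrix ι κ ℤ} {C : ℝ}

theorem mono (h : A.IntKernelNet C) {C' : ℝ} (hC : C ≤ C') : A.IntKernelNet C' :=
  fun x hx ↦ (h x hx).imp fun _ hk ↦ ⟨hk.1, fun j ↦ (hk.2 j).trans hC⟩

theorem zero : (0 : Matrix ι κ ℤ).IntKernelNet (1 / 2) :=
  fun x _ ↦ ⟨fun j ↦ round (x j), zero_mulVec _, fun j ↦ abs_sub_round (x j)⟩

theorem exists_smul (h : A.IntKernelNet C) {a : ℤ} (ha : a ≠ 0) {y : κ → ℝ}
    (hy : A.map (↑) *ᵥ y = 0) :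
    ∃ k : κ → ℤ, A *ᵥ k = 0 ∧ ∀ j, |y j - ((a * k j : ℤ) : ℝ)| ≤ |(a : ℝ)| * C := by
  obtain ⟨k, hk, hdist⟩ := h ((a : ℝ)⁻¹ • y) (by rw [mulVec_smul, hy, smul_zero])
  refine ⟨k, hk, fun j ↦ ?_⟩
  have ha' : (a : ℝ) ≠ 0 := Int.cast_ne_zero.mpr ha
  calc |y j - ((a * k j : ℤ) : ℝ)| = |(a : ℝ)| * |((a : ℝ)⁻¹ • y) j - k j| := by
        rw [← abs_mul, mul_sub, Pi.smul_apply, smul_eq_mul, mul_inv_cancel_left₀ ha']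
        push_cast
        rfl
    _ ≤ |(a : ℝ)| * C := mul_le_mul_of_nonneg_left (hdist j) (abs_nonneg _)

theorem of_eliminateColumn {n : ℕ} {A : Matrix ι (Fin (n + 1)) ℤ} {i₀ : ι} {j₀ : Fin (n + 1)}
    {H : ℕ} (hpivot : A i₀ j₀ ≠ 0) (hH : ∀ j, |A i₀ j| ≤ H) (hC : 0 ≤ C)
    (h : (A.eliminateColumn i₀ j₀).IntKernelNet C) :
    A.IntKernelNet ((n * H + 1) * (H * C)) := by
  intro x hx
  set a := A i₀ j₀
  have hy : (A.eliminateColumn i₀ j₀).map (↑) *ᵥ (x ∘ j₀.succAbove) = 0 := by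
    have hmap := map_eliminateColumn A i₀ j₀ (Int.castRingHom ℝ)
    simp only [Int.coe_castRingHom] at hmap
    funext i
    rw [hmap, eliminateColumn_mulVec_succAbove, hx]
    simp
  obtain ⟨k', hk', hdist'⟩ := h.exists_smul hpivot hy
  set k : Fin (n + 1) → ℤ :=
    Fin.insertNth j₀ (-(A.submatrix id j₀.succAbove *ᵥ k') i₀) (a • k')
  have hk : A *ᵥ k = 0 := mulVec_insertNth_eq_zero_of_eliminateColumn A i₀ j₀ hpivot hk'
  refine ⟨k, hk, fun j ↦ ?_⟩
  have hHC : 0 ≤ (H : ℝ) * C := by positivity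
  have hnear : ∀ t, |x (j₀.succAbove t) - k (j₀.succAbove t)| ≤ H * C := fun t ↦ by
    have ha : |(a : ℝ)| ≤ H := by exact_mod_cast hH j₀
    rw [show k (j₀.succAbove t) = a * k' t from Fin.insertNth_apply_succAbove _ _ _ t]
    exact (hdist' t).trans (mul_le_mul_of_nonneg_right ha hC)
  rcases eq_or_ne j j₀ with rfl | hj
  · have hdiff : A.map (↑) *ᵥ (x - fun j ↦ (k j : ℝ)) = 0 := by
      rw [mulVec_sub, hx, map_intCast_mulVec_intCast, hk]
      exact funext fun _ ↦ by simp
    calc |x j - k j| ≤ n * (H * (H * C)) :=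
          abs_le_of_dotProduct_eq_zero (congrFun hdiff i₀)
            (by rw [map_apply]; exact_mod_cast Int.one_le_abs hpivot)
            (fun j ↦ by rw [map_apply]; exact_mod_cast hH j) hnear
      _ ≤ (n * H + 1) * (H * C) := by nlinarith
  · obtain ⟨t, rfl⟩ := Fin.exists_succAbove_eq hj
    exact (hnear t).trans (le_mul_of_one_le_left hHC (le_add_of_nonneg_left (by positivity)))

end IntKernelNet

theorem exists_intKernelNet (n H : ℕ) :
    ∃ C > 0, ∀ {ι : Type*} (A : Matrix ι (Fin n) ℤ), (∀ i j, |A i j| ≤ H) → A.IntKernelNet C := by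
  induction n generalizing H with
  | zero => exact ⟨1, one_pos, fun A _ x _ ↦ ⟨0, mulVec_zero A, finZeroElim⟩⟩
  | succ n ih =>
    obtain ⟨C, hC, hnet⟩ := ih (2 * H ^ 2)
    refine ⟨max (1 / 2) ((n * H + 1) * (H * C)), by positivity, fun A hA ↦ ?_⟩
    by_cases hA0 : A = 0
    · exact hA0 ▸ IntKernelNet.zero.mono (le_max_left _ _)
    obtain ⟨i₀, j₀, hpivot⟩ : ∃ i j, A i j ≠ 0 := by
      by_contra! h
      exact hA0 (ext h)
    refine (IntKernelNet.of_eliminateColumn hpivot (hA i₀) hC.le (hnet _ fun i t ↦ ?_)).mono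
      (le_max_right _ _)
    exact_mod_cast abs_eliminateColumn_apply_le A i₀ j₀ hA i t

end IntKernel

end Matrix

theorem stmt_13_general (N : ℕ) :
    ∃ C > (0 : ℝ), ∀ (m : ℕ) (A : Matrix (Fin m) (Fin N) ℝ),
      (∀ i j, A i j = 0 ∨ A i j = 1 ∨ A i j = -1) →
      ∀ x : Fin N → ℝ, A.mulVec x = 0 →
        ∃ k : Fin N → ℤ,
          A.mulVec (fun i => (k i : ℝ)) = 0 ∧ ∀ i, |x i - (k i : ℝ)| ≤ C := by
  obtain ⟨C, hC, hnet⟩ := exists_intKernelNet N 1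
  refine ⟨C, hC, fun m A hA x hx ↦ ?_⟩
  obtain ⟨A', rfl, hA'⟩ := exists_map_intCast_eq_of_mem_zero_one_neg_one hA
  obtain ⟨k, hk, hdist⟩ := hnet A' (by exact_mod_cast hA') x hx
  refine ⟨k, ?_, hdist⟩
  rw [map_intCast_mulVec_intCast, hk]
  exact funext fun _ ↦ Int.cast_zero

/-- Lemma 6.9 (lem:linalg0): for every `N ≥ 1` there is a constant `C > 0`
depending only on `N` such that every real solution of a homogeneous linear
system in `N` variables with coefficients in `{0, 1, −1}` lies within entrywise
distance `C` of an integer solution. -/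
theorem stmt_13 (N : ℕ) (hN : 1 ≤ N) :
    ∃ C > (0 : ℝ), ∀ (m : ℕ) (A : Matrix (Fin m) (Fin N) ℝ),
      (∀ i j, A i j = 0 ∨ A i j = 1 ∨ A i j = -1) →
      ∀ x : Fin N → ℝ, A.mulVec x = 0 →
        ∃ k : Fin N → ℤ,
          A.mulVec (fun i => (k i : ℝ)) = 0 ∧ ∀ i, |x i - (k i : ℝ)| ≤ C :=
  stmt_13_general N
end

section
/- Let N ≥ 1 and let C = C(N) be the constant from the integer-approximation lemma. Let A be a matrix with m rows and N columns all of whose entries lie in {0, 1, −1}, and let x ∈ ℝ^N satisfy A·x = 0 and xᵢ > 0 for every i. Then there exists T₀ > 0 such that for every t > T₀ there exists k ∈ ℤ^N with A·k = 0, kᵢ > 0 for every i, and |t·xᵢ − kᵢ| ≤ C for each 1 ≤ i ≤ N. -/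
lemma Int.pos_of_abs_sub_le_of_lt {y C : ℝ} {k : ℤ} (hk : |y - k| ≤ C) (hCy : C < y) :
    0 < k := by
  have hyk := (abs_le.mp hk).2
  exact_mod_cast (by linarith : (0 : ℝ) < k)

/-- Corollary 6.10 (cor:linalg1): let `C` be a constant with the property of the
integer-approximation lemma (every real solution of a homogeneous system with
coefficients in `{0, 1, −1}` in `N` variables is within entrywise distance `C`
of an integer solution). If `x` is a strictly positive real solution of such a
system, then there is `T₀ > 0` such that for every `t > T₀` there is a strictly
positive integer solution `k` with `|t·xᵢ − kᵢ| ≤ C` for every `i`. -/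
theorem stmt_14 (N : ℕ) (hN : 1 ≤ N) (C : ℝ) (hC : 0 < C)
    (hCprop : ∀ (m : ℕ) (A : Matrix (Fin m) (Fin N) ℝ),
      (∀ i j, A i j = 0 ∨ A i j = 1 ∨ A i j = -1) →
      ∀ x : Fin N → ℝ, A.mulVec x = 0 →
        ∃ k : Fin N → ℤ,
          A.mulVec (fun i => (k i : ℝ)) = 0 ∧ ∀ i, |x i - (k i : ℝ)| ≤ C)
    (m : ℕ) (A : Matrix (Fin m) (Fin N) ℝ)
    (hA : ∀ i j, A i j = 0 ∨ A i j = 1 ∨ A i j = -1)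
    (x : Fin N → ℝ) (hx : A.mulVec x = 0) (hxpos : ∀ i, 0 < x i) :
    ∃ T₀ > (0 : ℝ), ∀ t : ℝ, T₀ < t →
      ∃ k : Fin N → ℤ,
        A.mulVec (fun i => (k i : ℝ)) = 0 ∧ (∀ i, 0 < k i) ∧
        ∀ i, |t * x i - (k i : ℝ)| ≤ C := by
  have : Nonempty (Fin N) := ⟨⟨0, hN⟩⟩
  obtain ⟨i₀, hi₀⟩ := Finite.exists_min x
  have hT₀ : 0 < C / x i₀ := div_pos hC (hxpos i₀)
  refine ⟨C / x i₀, hT₀, fun t ht => ?_⟩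
  obtain ⟨k, hAk, hk⟩ :=
    hCprop m A hA (t • x) (by rw [Matrix.mulVec_smul, hx, smul_zero])
  refine ⟨k, hAk, fun i => Int.pos_of_abs_sub_le_of_lt (hk i) ?_, hk⟩
  calc C < t * x i₀ := (div_lt_iff₀ (hxpos i₀)).mp ht
    _ ≤ t * x i := by gcongr; exacts [(hT₀.trans ht).le, hi₀ i]
end
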